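/- Let R be an indecomposable commutative ring with unit and G a Hausdorff ample groupoid. Let m belong to the normalizer N of the diagonal (i.e., there is m' with mm'm = m, m'mm' = m', mD(G)m' ∪ m'D(G)m ⊆ D(G)). Then for α, β ∈ supp(m): d(α) = d(β) if and only if r(α) = r(β). -/
import Mathlib


/-- A topological groupoid whose arrows form the space `A`; objects are identified
with identity arrows via the source map. All structure maps are continuous and the
source map is a local homeomorphism (étale). -/
structure AmpleGroupoid (A : Type*) [TopologicalSpace A] where
  src : A → A
  rng : A → A
  comp : A → A → A
  inv : A → A
  src_src : ∀ a, src (src a) = src a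
  rng_src : ∀ a, rng (src a) = src a
  src_rng : ∀ a, src (rng a) = rng a
  rng_rng : ∀ a, rng (rng a) = rng a
  src_comp : ∀ a b, src a = rng b → src (comp a b) = src b
  rng_comp : ∀ a b, src a = rng b → rng (comp a b) = rng a
  comp_assoc : ∀ a b c, src a = rng b → src b = rng c →
    comp (comp a b) c = comp a (comp b c)
  id_comp : ∀ a, comp (rng a) a = a
  comp_id : ∀ a, comp a (src a) = a
  inv_comp : ∀ a, comp (inv a) a = src a
  comp_inv : ∀ a, comp a (inv a) = rng a
  src_inv : ∀ a, src (inv a) = rng a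
  rng_inv : ∀ a, rng (inv a) = src a
  continuous_inv : Continuous inv
  continuous_comp : Continuous fun p : {p : A × A // src p.1 = rng p.2} =>
    comp p.1.1 p.1.2
  isLocalHomeomorph_src : IsLocalHomeomorph src
  isLocalHomeomorph_rng : IsLocalHomeomorph rng

namespace AmpleGroupoid

variable {A : Type*} [TopologicalSpace A] (G : AmpleGroupoid A)

/-- The unit space (identity arrows). -/
def units : Set A := Set.range G.src

/-- The unit space has a basis of compact open sets (ampleness). -/
def AmpleUnits : Prop := ∀ U : Set A, IsOpen U → ∀ a ∈ U ∩ G.units,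
  ∃ K : Set A, IsCompact K ∧ IsOpen K ∧ a ∈ K ∧ K ⊆ U ∩ G.units

/-- The unit space is Hausdorff. -/
def UnitsT2 : Prop := ∀ a ∈ G.units, ∀ b ∈ G.units, a ≠ b →
  ∃ U V : Set A, IsOpen U ∧ IsOpen V ∧ a ∈ U ∧ b ∈ V ∧ Disjoint U V

/-- A (open) local bisection: an open set on which both `src` and `rng` are injective. -/
def IsBisection (U : Set A) : Prop :=
  IsOpen U ∧ Set.InjOn G.src U ∧ Set.InjOn G.rng U

/-- Pointwise product of subsets of arrows. -/
def setMul (U V : Set A) : Set A :=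
  {c | ∃ a ∈ U, ∃ b ∈ V, G.src a = G.rng b ∧ c = G.comp a b}

/-- Pointwise inverse of a subset of arrows. -/
def setInv (U : Set A) : Set A := G.inv '' U

/-- Members of `Γ_c(G)`: compact open local bisections. -/
def Gamma (U : Set A) : Prop := IsCompact U ∧ G.IsBisection U

end AmpleGroupoid

namespace AmpleGroupoid

variable {A : Type*} [TopologicalSpace A] {R : Type*} [CommRing R]

/-- The convolution product on `R`-valued functions on the arrow space:
`(f * g)(γ) = Σ_{d(α) = d(γ)} f(γα⁻¹) g(α)`. -/
noncomputable def conv (G : AmpleGroupoid A) (f g : A → R) : A → R :=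
  fun γ => ∑ᶠ (α : A) (_ : G.src α = G.src γ), f (G.comp γ (G.inv α)) * g α

/-- Membership in the convolution algebra `RG`: locally constant with compact
support. -/
def InRG (f : A → R) : Prop :=
  IsLocallyConstant f ∧ IsCompact (Function.support f)

/-- Membership in the diagonal subalgebra `D(G)`: an element of `RG` supported on
the unit space. -/
def InDiag (G : AmpleGroupoid A) (f : A → R) : Prop :=
  InRG f ∧ Function.support f ⊆ G.units

/-- The isotropy bundle: arrows with equal source and range. -/
def iso (G : AmpleGroupoid A) : Set A := {a | G.src a = G.rng a}

end AmpleGroupoid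

namespace AmpleGroupoid

open Function Set

section Alg

variable {A : Type*} [TopologicalSpace A] {R : Type*} [CommRing R] (G : AmpleGroupoid A)

lemma rng_of_unit {x : A} (h : G.src x = x) : G.rng x = x := by
  conv_lhs => rw [← h, G.rng_src]
  exact h

lemma inv_of_unit {x : A} (h : G.src x = x) : G.inv x = x := by
  have h1 : G.inv x = G.comp (G.rng (G.inv x)) (G.inv x) := (G.id_comp _).symm
  rw [G.rng_inv, h] at h1
  rw [h1, G.comp_inv, G.rng_of_unit h]

lemma comp_inv_cancel' (a b : A) (h : G.src a = G.rng b) :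
    G.comp (G.comp a b) (G.inv b) = a := by
  rw [G.comp_assoc a b (G.inv b) h (by rw [G.rng_inv]), G.comp_inv, ← h, G.comp_id]

lemma comp_cancel_inv (a b : A) (h : G.src a = G.src b) :
    G.comp (G.comp a (G.inv b)) b = a := by
  rw [G.comp_assoc a (G.inv b) b (by rw [G.rng_inv, h]) (by rw [G.src_inv]),
    G.inv_comp, ← h, G.comp_id]

lemma eq_of_comp_inv_unit {γ α : A} (hs : G.src α = G.src γ)
    (hu : G.comp γ (G.inv α) ∈ G.units) : α = γ := by
  obtain ⟨z, hz⟩ := hu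
  have hsu : G.src (G.comp γ (G.inv α)) = G.comp γ (G.inv α) := by
    rw [← hz, G.src_src]
  have hc : G.src γ = G.rng (G.inv α) := by rw [G.rng_inv, hs]
  have h1 : G.comp γ (G.inv α) = G.rng α := by
    rw [← hsu, G.src_comp _ _ hc, G.src_inv]
  have h2 : α = G.comp (G.comp γ (G.inv α)) α := by
    rw [h1, G.id_comp]
  rw [h2, G.comp_assoc _ _ _ hc (by rw [G.src_inv]), G.inv_comp, hs, G.comp_id]

lemma inv_unique {x a : A} (hcomp : G.src x = G.rng a) (h : G.comp x a = G.src a) :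
    x = G.inv a := by
  calc x = G.comp x (G.src x) := (G.comp_id x).symm
    _ = G.comp x (G.comp a (G.inv a)) := by rw [hcomp, G.comp_inv]
    _ = G.comp (G.comp x a) (G.inv a) := (G.comp_assoc _ _ _ hcomp (by rw [G.rng_inv])).symm
    _ = G.comp (G.rng (G.inv a)) (G.inv a) := by rw [h, G.rng_inv]
    _ = G.inv a := G.id_comp _

lemma inv_comp_eq {a b : A} (h : G.src a = G.rng b) :
    G.inv (G.comp a b) = G.comp (G.inv b) (G.inv a) := by
  refine (G.inv_unique ?_ ?_).symm
  · rw [G.src_comp _ _ (by rw [G.src_inv, G.rng_inv, h]), G.src_inv, G.rng_comp _ _ h]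
  · have h1 : G.comp (G.comp (G.inv b) (G.inv a)) (G.comp a b)
        = G.comp (G.inv b) (G.comp (G.inv a) (G.comp a b)) :=
      G.comp_assoc _ _ _ (by rw [G.src_inv, G.rng_inv, h]) (by rw [G.src_inv, G.rng_comp _ _ h])
    have h2 : G.comp (G.inv a) (G.comp a b) = b := by
      rw [← G.comp_assoc _ _ _ (by rw [G.src_inv]) h, G.inv_comp, h, G.id_comp]
    rw [h1, h2, G.inv_comp, G.src_comp _ _ h]

lemma comp_inv_inv (γ a b : A) (hγ : G.src γ = G.src b) (hab : G.src a = G.rng b) :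
    G.comp (G.comp γ (G.inv b)) (G.inv a) = G.comp γ (G.inv (G.comp a b)) := by
  rw [G.inv_comp_eq hab,
    G.comp_assoc γ (G.inv b) (G.inv a) (by rw [G.rng_inv, hγ])
      (by rw [G.src_inv, G.rng_inv, hab])]

end Alg

section Conv

variable {A : Type*} [TopologicalSpace A] {R : Type*} [CommRing R] (G : AmpleGroupoid A)

lemma conv_apply (f g : A → R) (γ : A) :
    G.conv f g γ = ∑ᶠ (α : A) (_ : G.src α = G.src γ), f (G.comp γ (G.inv α)) * g α := rfl

lemma conv_eq_sum (f g : A → R) (γ : A) (T : Finset A)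
    (h1 : ∀ a, G.src a = G.src γ → f (G.comp γ (G.inv a)) * g a ≠ 0 → a ∈ T)
    (h2 : ∀ a ∈ T, G.src a = G.src γ) :
    G.conv f g γ = ∑ a ∈ T, f (G.comp γ (G.inv a)) * g a := by
  rw [conv_apply]
  exact finsum_cond_eq_sum_of_cond_iff _ (fun {a} ha => ⟨fun hp => h1 a hp ha, fun ht => h2 a ht⟩)

lemma conv_eq_single (f g : A → R) (γ a0 : A) (h0 : G.src a0 = G.src γ)
    (hz : ∀ a, G.src a = G.src γ → a ≠ a0 → f (G.comp γ (G.inv a)) * g a = 0) :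
    G.conv f g γ = f (G.comp γ (G.inv a0)) * g a0 := by
  rw [conv_eq_sum G f g γ {a0} (fun a hp hne => by
      by_contra hmem
      exact hne (hz a hp (by simpa using hmem)))
    (fun a ha => by rw [Finset.mem_singleton] at ha; rw [ha, h0]), Finset.sum_singleton]

lemma conv_diag_left (d g : A → R) (hd : Function.support d ⊆ G.units) (γ : A) :
    G.conv d g γ = d (G.rng γ) * g γ := by
  have := G.conv_eq_single d g γ γ rfl (fun a hp hne => by
    by_cases hda : d (G.comp γ (G.inv a)) = 0
    · rw [hda, zero_mul]
    · exact absurd (G.eq_of_comp_inv_unit hp (hd hda)) hne)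
  rwa [G.comp_inv] at this

lemma conv_diag_right (f d : A → R) (hd : Function.support d ⊆ G.units) (γ : A) :
    G.conv f d γ = f γ * d (G.src γ) := by
  have := G.conv_eq_single f d γ (G.src γ) (G.src_src γ) (fun a hp hne => by
    by_cases hda : d a = 0
    · rw [hda, mul_zero]
    · obtain ⟨z, hz⟩ := hd hda
      have hsa : G.src a = a := by rw [← hz, G.src_src]
      exact absurd (hsa.symm.trans hp) hne)
  rwa [G.inv_of_unit (G.src_src γ), G.comp_id] at this

lemma conv_assoc (f g h : A → R)
    (hg : ∀ x, {a | g a ≠ 0 ∧ G.src a = x}.Finite)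
    (hh : ∀ x, {a | h a ≠ 0 ∧ G.src a = x}.Finite) :
    G.conv (G.conv f g) h = G.conv f (G.conv g h) := by
  classical
  funext γ
  set Sh : Finset A := (hh (G.src γ)).toFinset with hShdef
  have memSh : ∀ b, b ∈ Sh ↔ h b ≠ 0 ∧ G.src b = G.src γ := by
    intro b; rw [hShdef, Set.Finite.mem_toFinset]; rfl
  set Tb : A → Finset A := fun b => (hg (G.rng b)).toFinset with hTbdef
  have memTb : ∀ b a, a ∈ Tb b ↔ g a ≠ 0 ∧ G.src a = G.rng b := by
    intro b a; rw [hTbdef]; rw [Set.Finite.mem_toFinset]; rfl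
  set Sd : Finset A := Sh.biUnion (fun b => (Tb b).image (fun a => G.comp a b)) with hSddef
  have memSd : ∀ δ, δ ∈ Sd ↔ ∃ b ∈ Sh, ∃ a ∈ Tb b, δ = G.comp a b := by
    intro δ
    rw [hSddef, Finset.mem_biUnion]
    constructor
    · rintro ⟨b, hb, hδ⟩
      rw [Finset.mem_image] at hδ
      obtain ⟨a, ha, rfl⟩ := hδ
      exact ⟨b, hb, a, ha, rfl⟩
    · rintro ⟨b, hb, a, ha, rfl⟩
      exact ⟨b, hb, Finset.mem_image.2 ⟨a, ha, rfl⟩⟩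
  have srcSd : ∀ δ ∈ Sd, G.src δ = G.src γ := by
    intro δ hδ
    obtain ⟨b, hb, a, ha, rfl⟩ := (memSd δ).1 hδ
    rw [G.src_comp a b ((memTb b a).1 ha).2, ((memSh b).1 hb).2]
  have hL1 : G.conv (G.conv f g) h γ
      = ∑ b ∈ Sh, G.conv f g (G.comp γ (G.inv b)) * h b :=
    G.conv_eq_sum _ h γ Sh
      (fun b hp hne => (memSh b).2 ⟨fun hz => hne (by rw [hz, mul_zero]), hp⟩)
      (fun b hb => ((memSh b).1 hb).2)
  have hL2 : ∀ b ∈ Sh, G.conv f g (G.comp γ (G.inv b))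
      = ∑ a ∈ Tb b, f (G.comp γ (G.inv (G.comp a b))) * g a := by
    intro b hb
    have hsb : G.src b = G.src γ := ((memSh b).1 hb).2
    have hsrc : G.src (G.comp γ (G.inv b)) = G.rng b := by
      rw [G.src_comp _ _ (by rw [G.rng_inv, hsb]), G.src_inv]
    have e1 : G.conv f g (G.comp γ (G.inv b))
        = ∑ a ∈ Tb b, f (G.comp (G.comp γ (G.inv b)) (G.inv a)) * g a :=
      G.conv_eq_sum f g _ (Tb b)
        (fun a hp hne => (memTb b a).2 ⟨fun hz => hne (by rw [hz, mul_zero]), by rw [← hsrc, hp]⟩)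
        (fun a ha => by rw [((memTb b a).1 ha).2, hsrc])
    rw [e1]
    refine Finset.sum_congr rfl (fun a ha => ?_)
    rw [G.comp_inv_inv γ a b hsb.symm ((memTb b a).1 ha).2]
  have hswap : ∀ b ∈ Sh, ∑ a ∈ Tb b, f (G.comp γ (G.inv (G.comp a b))) * g a
      = ∑ δ ∈ Sd, f (G.comp γ (G.inv δ)) * g (G.comp δ (G.inv b)) := by
    intro b hb
    have hsb : G.src b = G.src γ := ((memSh b).1 hb).2
    refine Finset.sum_bij_ne_zero (fun a _ _ => G.comp a b) ?_ ?_ ?_ ?_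
    · intro a ha _
      exact (memSd _).2 ⟨b, hb, a, ha, rfl⟩
    · intro a₁ h₁₁ _ a₂ h₂₁ _ heq
      have heq' : G.comp a₁ b = G.comp a₂ b := heq
      calc a₁ = G.comp (G.comp a₁ b) (G.inv b) :=
            (G.comp_inv_cancel' a₁ b ((memTb b a₁).1 h₁₁).2).symm
        _ = G.comp (G.comp a₂ b) (G.inv b) := by rw [heq']
        _ = a₂ := G.comp_inv_cancel' a₂ b ((memTb b a₂).1 h₂₁).2
    · intro δ hδ hne
      have hsδ : G.src δ = G.src γ := srcSd δ hδ
      have hgz : g (G.comp δ (G.inv b)) ≠ 0 := fun hz => hne (by rw [hz, mul_zero])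
      have hsa : G.src (G.comp δ (G.inv b)) = G.rng b := by
        rw [G.src_comp _ _ (by rw [G.rng_inv, hsb, hsδ]), G.src_inv]
      have hc : G.comp (G.comp δ (G.inv b)) b = δ :=
        G.comp_cancel_inv δ b (by rw [hsδ, hsb])
      refine ⟨G.comp δ (G.inv b), (memTb _ _).2 ⟨hgz, hsa⟩, ?_, hc⟩
      show f (G.comp γ (G.inv (G.comp (G.comp δ (G.inv b)) b))) * g (G.comp δ (G.inv b)) ≠ 0
      rw [hc]; exact hne
    · intro a ha _
      rw [G.comp_inv_cancel' a b ((memTb b a).1 ha).2]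
  have hgh : ∀ δ, G.src δ = G.src γ →
      G.conv g h δ = ∑ b ∈ Sh, g (G.comp δ (G.inv b)) * h b := by
    intro δ hsδ
    exact G.conv_eq_sum g h δ Sh
      (fun b hp hne => (memSh b).2 ⟨fun hz => hne (by rw [hz, mul_zero]), by rw [hp, hsδ]⟩)
      (fun b hbSh => by rw [((memSh b).1 hbSh).2, hsδ])
  have hR1 : G.conv f (G.conv g h) γ
      = ∑ δ ∈ Sd, f (G.comp γ (G.inv δ)) * G.conv g h δ := by
    refine G.conv_eq_sum f (G.conv g h) γ Sd ?_ srcSd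
    intro δ hsδ hne
    have hcz : G.conv g h δ ≠ 0 := fun hz => hne (by rw [hz, mul_zero])
    rw [hgh δ hsδ] at hcz
    obtain ⟨b, hbSh, hbne⟩ := Finset.exists_ne_zero_of_sum_ne_zero hcz
    have hsb : G.src b = G.src γ := ((memSh b).1 hbSh).2
    have hgz : g (G.comp δ (G.inv b)) ≠ 0 := fun hz => hbne (by rw [hz, zero_mul])
    have hsa : G.src (G.comp δ (G.inv b)) = G.rng b := by
      rw [G.src_comp _ _ (by rw [G.rng_inv, hsb, hsδ]), G.src_inv]
    exact (memSd δ).2 ⟨b, hbSh, G.comp δ (G.inv b), (memTb _ _).2 ⟨hgz, hsa⟩,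
      (G.comp_cancel_inv δ b (by rw [hsδ, hsb])).symm⟩
  calc G.conv (G.conv f g) h γ
      = ∑ b ∈ Sh, (∑ δ ∈ Sd, f (G.comp γ (G.inv δ)) * g (G.comp δ (G.inv b))) * h b := by
        rw [hL1]
        exact Finset.sum_congr rfl (fun b hb => by rw [hL2 b hb, hswap b hb])
    _ = ∑ b ∈ Sh, ∑ δ ∈ Sd, f (G.comp γ (G.inv δ)) * g (G.comp δ (G.inv b)) * h b := by
        exact Finset.sum_congr rfl (fun b _ => Finset.sum_mul _ _ _)
    _ = ∑ δ ∈ Sd, ∑ b ∈ Sh, f (G.comp γ (G.inv δ)) * g (G.comp δ (G.inv b)) * h b :=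
        Finset.sum_comm
    _ = ∑ δ ∈ Sd, f (G.comp γ (G.inv δ)) * G.conv g h δ := by
        refine Finset.sum_congr rfl (fun δ hδ => ?_)
        rw [hgh δ (srcSd δ hδ), Finset.mul_sum]
        exact Finset.sum_congr rfl (fun b _ => mul_assoc _ _ _)
    _ = G.conv f (G.conv g h) γ := hR1.symm

end Conv

end AmpleGroupoid
namespace AmpleGroupoid

open Function Set

section Topo

variable {A : Type*} [TopologicalSpace A] [T2Space A] {R : Type*} [CommRing R]
  (G : AmpleGroupoid A)

/-- Fibers of the source map over the support of an element of `RG` are finite. -/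
lemma srcFin (f : A → R) (hf : InRG f) :
    ∀ x, {a | f a ≠ 0 ∧ G.src a = x}.Finite := by
  intro x
  set S := {a | f a ≠ 0 ∧ G.src a = x} with hS
  have hconts : Continuous G.src := G.isLocalHomeomorph_src.continuous
  have hsupp_closed : IsClosed (Function.support f) := by
    have : Function.support f = (f ⁻¹' {0})ᶜ := by
      ext a; simp [Function.mem_support]
    rw [this]
    exact (hf.1 {0}).isClosed_compl
  have hSclosed : IsClosed S := by
    have : S = Function.support f ∩ G.src ⁻¹' {x} := by
      ext a; simp [hS, Function.mem_support]
    rw [this]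
    exact hsupp_closed.inter (isClosed_singleton.preimage hconts)
  have hScpt : IsCompact S := hf.2.of_isClosed_subset hSclosed (fun a ha => ha.1)
  choose E hE1 hE2 using G.isLocalHomeomorph_src
  have hcover : S ⊆ ⋃ a ∈ S, (E a).source := fun a ha =>
    Set.mem_biUnion ha (hE1 a)
  obtain ⟨t, hts, htfin, htcov⟩ := hScpt.elim_finite_subcover_image
    (fun a _ => (E a).open_source) hcover
  refine Set.Finite.subset htfin (fun s hs => ?_)
  obtain ⟨a, hat, hsE⟩ := Set.mem_iUnion₂.1 (htcov hs)
  have haS : a ∈ S := hts hat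
  have : s = a := by
    have hinj := (E a).injOn
    have h1 : G.src s = G.src a := by rw [hs.2, haS.2]
    rw [hE2 a] at h1
    exact hinj hsE (hE1 a) h1
  rwa [this]

open scoped Classical in
/-- Characteristic function of a set. -/
noncomputable def chi (R : Type*) [CommRing R] {A : Type*} (V : Set A) : A → R :=
  fun a => if a ∈ V then (1 : R) else 0

lemma chi_support {V : Set A} : Function.support (chi R (A := A) V) ⊆ V := by
  intro a ha
  by_contra hv
  exact ha (by simp [chi, hv])

lemma chi_of_mem {V : Set A} {a : A} (h : a ∈ V) : chi R (A := A) V a = 1 := by simp [chi, h]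

lemma chi_of_not_mem {V : Set A} {a : A} (h : a ∉ V) : chi R (A := A) V a = 0 := by
  simp [chi, h]

lemma chi_inRG {V : Set A} (hc : IsCompact V) (ho : IsOpen V) :
    InRG (chi R (A := A) V) := by
  constructor
  · rw [IsLocallyConstant.iff_exists_open]
    intro x
    by_cases hx : x ∈ V
    · exact ⟨V, ho, hx, fun y hy => by rw [chi_of_mem hy, chi_of_mem hx]⟩
    · exact ⟨Vᶜ, hc.isClosed.isOpen_compl, hx,
        fun y hy => by rw [chi_of_not_mem hy, chi_of_not_mem hx]⟩
  · by_cases h10 : (1 : R) = 0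
    · have : Function.support (chi R (A := A) V) = ∅ := by
        ext a
        simp only [Function.mem_support, Set.mem_empty_iff_false, iff_false, not_not, chi]
        split_ifs <;> simp [h10]
      rw [this]; exact isCompact_empty
    · have : Function.support (chi R (A := A) V) = V := by
        ext a
        simp only [Function.mem_support, chi]
        split_ifs with h <;> simp [h, h10]
      rwa [this]

lemma chi_inDiag {V : Set A} (hc : IsCompact V) (ho : IsOpen V) (hu : V ⊆ G.units) :
    G.InDiag (chi R (A := A) V) :=
  ⟨chi_inRG hc ho, fun a ha => hu (chi_support ha)⟩

lemma exists_compact_cover (hG : G.AmpleUnits) (C : Set A) (hC : IsCompact C)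
    (hCu : C ⊆ G.units) :
    ∃ K : Set A, IsCompact K ∧ IsOpen K ∧ K ⊆ G.units ∧ C ⊆ K := by
  have h : ∀ a ∈ C, ∃ K : Set A, IsCompact K ∧ IsOpen K ∧ a ∈ K ∧ K ⊆ Set.univ ∩ G.units :=
    fun a ha => hG Set.univ isOpen_univ a ⟨Set.mem_univ a, hCu ha⟩
  choose! Ka h1 h2 h3 h4 using h
  have hcover : C ⊆ ⋃ a ∈ C, Ka a := fun a ha => Set.mem_biUnion ha (h3 a ha)
  obtain ⟨t, hts, htfin, htcov⟩ := hC.elim_finite_subcover_image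
    (fun a ha => h2 a ha) hcover
  refine ⟨⋃ a ∈ t, Ka a, ?_, ?_, ?_, htcov⟩
  · exact htfin.isCompact_biUnion (fun a ha => h1 a (hts ha))
  · exact isOpen_biUnion (fun a ha => h2 a (hts ha))
  · intro z hz
    obtain ⟨a, hat, hza⟩ := Set.mem_iUnion₂.1 hz
    exact (h4 a (hts hat) hza).2

lemma exists_disjoint_nbhds (hG : G.AmpleUnits) {x y : A} (hx : x ∈ G.units)
    (hy : y ∈ G.units) (hxy : x ≠ y) :
    ∃ V V' : Set A, IsCompact V ∧ IsOpen V ∧ V ⊆ G.units ∧ x ∈ V ∧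
      IsCompact V' ∧ IsOpen V' ∧ V' ⊆ G.units ∧ y ∈ V' ∧ Disjoint V V' := by
  obtain ⟨U, W, hU, hW, hxU, hyW, hdisj⟩ := t2_separation hxy
  obtain ⟨V, hVc, hVo, hxV, hVsub⟩ := hG U hU x ⟨hxU, hx⟩
  obtain ⟨V', hV'c, hV'o, hyV', hV'sub⟩ := hG W hW y ⟨hyW, hy⟩
  exact ⟨V, V', hVc, hVo, fun a ha => (hVsub ha).2, hxV,
    hV'c, hV'o, fun a ha => (hV'sub ha).2, hyV',
    hdisj.mono (fun a ha => (hVsub ha).1) (fun a ha => (hV'sub ha).1)⟩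

end Topo

end AmpleGroupoid
open AmpleGroupoid in
/-- Over an indecomposable commutative ring `R`, if `m` belongs to
the normalizer of the diagonal of the convolution algebra of a Hausdorff ample
groupoid, then for `α, β ∈ supp(m)` one has `d(α) = d(β)` iff `r(α) = r(β)`. -/
theorem stmt17 {A : Type*} [TopologicalSpace A] [T2Space A]
    {R : Type*} [CommRing R]
    (hR : ∀ e : R, e * e = e → e = 0 ∨ e = 1)
    (G : AmpleGroupoid A) (hG : G.AmpleUnits)
    (m m' : A → R) (hm : InRG m) (hm' : InRG m')
    (h1 : G.conv (G.conv m m') m = m) (h2 : G.conv (G.conv m' m) m' = m')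
    (h3 : ∀ d : A → R, G.InDiag d → G.InDiag (G.conv (G.conv m d) m'))
    (h4 : ∀ d : A → R, G.InDiag d → G.InDiag (G.conv (G.conv m' d) m)) :
    ∀ α ∈ Function.support m, ∀ β ∈ Function.support m,
      (G.src α = G.src β ↔ G.rng α = G.rng β) := by
  classical
  intro α hα β hβ
  rw [Function.mem_support] at hα hβ
  have hcs : Continuous G.src := G.isLocalHomeomorph_src.continuous
  have hSFm := G.srcFin m hm
  have hSFm' := G.srcFin m' hm'
  -- `e = m * m'` is diagonal
  obtain ⟨K₀, hK₀c, hK₀o, hK₀u, hK₀s⟩ := G.exists_compact_cover hG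
    (G.src '' Function.support m) (hm.2.image hcs)
    (by rintro _ ⟨a, -, rfl⟩; exact ⟨a, rfl⟩)
  have hchiK₀ : Function.support (chi R (A := A) K₀) ⊆ G.units :=
    fun a ha => hK₀u (chi_support ha)
  have hmchi : G.conv m (chi R K₀) = m := by
    funext γ
    rw [G.conv_diag_right m (chi R K₀) hchiK₀ γ]
    by_cases hγ : m γ = 0
    · rw [hγ, zero_mul]
    · rw [chi_of_mem (hK₀s ⟨γ, hγ, rfl⟩), mul_one]
  have he : G.InDiag (G.conv m m') := by
    have h := h3 (chi R K₀) (G.chi_inDiag hK₀c hK₀o hK₀u)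
    rwa [hmchi] at h
  -- `f = m' * m` is diagonal
  obtain ⟨K₁, hK₁c, hK₁o, hK₁u, hK₁s⟩ := G.exists_compact_cover hG
    (G.src '' Function.support m') (hm'.2.image hcs)
    (by rintro _ ⟨a, -, rfl⟩; exact ⟨a, rfl⟩)
  have hchiK₁ : Function.support (chi R (A := A) K₁) ⊆ G.units :=
    fun a ha => hK₁u (chi_support ha)
  have hm'chi : G.conv m' (chi R K₁) = m' := by
    funext γ
    rw [G.conv_diag_right m' (chi R K₁) hchiK₁ γ]
    by_cases hγ : m' γ = 0
    · rw [hγ, zero_mul]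
    · rw [chi_of_mem (hK₁s ⟨γ, hγ, rfl⟩), mul_one]
  have hf : G.InDiag (G.conv m' m) := by
    have h := h4 (chi R K₁) (G.chi_inDiag hK₁c hK₁o hK₁u)
    rwa [hm'chi] at h
  -- pointwise identities from `m m' m = m`
  have hem : ∀ γ, G.conv m m' (G.rng γ) * m γ = m γ := by
    intro γ
    have h := G.conv_diag_left (G.conv m m') m he.2 γ
    rw [h1] at h; exact h.symm
  have hassoc1 : G.conv (G.conv m m') m = G.conv m (G.conv m' m) :=
    G.conv_assoc m m' m hSFm' hSFm
  have hconvmf : G.conv m (G.conv m' m) = m := by rw [← hassoc1]; exact h1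
  have hmf : ∀ γ, m γ * G.conv m' m (G.src γ) = m γ := by
    intro γ
    have h := G.conv_diag_right m (G.conv m' m) hf.2 γ
    rw [hconvmf] at h; exact h.symm
  have hSFchi : ∀ V : Set A, IsCompact V → IsOpen V →
      ∀ x, {a | chi R (A := A) V a ≠ 0 ∧ G.src a = x}.Finite :=
    fun V hc ho => G.srcFin (chi R V) (chi_inRG hc ho)
  -- forward crux
  have fwdCrux : ∀ V : Set A, IsCompact V → IsOpen V → V ⊆ G.units → ∀ δ,
      m δ * (G.conv (G.conv m' (chi R V)) m) (G.src δ)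
        = chi R V (G.rng δ) * m δ := by
    intro V hVc hVo hVu δ
    have hchiV : Function.support (chi R (A := A) V) ⊆ G.units :=
      fun a ha => hVu (chi_support ha)
    have hfV : G.InDiag (G.conv (G.conv m' (chi R V)) m) :=
      h4 _ (G.chi_inDiag hVc hVo hVu)
    have hSFc : ∀ x, {a | G.conv m' (chi R V) a ≠ 0 ∧ G.src a = x}.Finite := by
      intro x
      refine (hSFm' x).subset ?_
      rintro a ⟨ha1, ha2⟩
      refine ⟨fun hz => ha1 ?_, ha2⟩
      rw [G.conv_diag_right m' _ hchiV a, hz, zero_mul]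
    have hA1 : G.conv (G.conv m m') (chi R V) = G.conv m (G.conv m' (chi R V)) :=
      G.conv_assoc m m' (chi R V) hSFm' (hSFchi V hVc hVo)
    have hA2 : G.conv (G.conv m (G.conv m' (chi R V))) m
        = G.conv m (G.conv (G.conv m' (chi R V)) m) :=
      G.conv_assoc m (G.conv m' (chi R V)) m hSFc hSFm
    have hchain : G.conv m (G.conv (G.conv m' (chi R V)) m)
        = G.conv (G.conv (G.conv m m') (chi R V)) m := by
      rw [hA1]; exact hA2.symm
    have hsupp : Function.support (G.conv (G.conv m m') (chi R V)) ⊆ G.units := by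
      intro a ha
      rw [Function.mem_support, G.conv_diag_right _ _ hchiV a] at ha
      exact he.2 (fun hz => ha (by rw [hz, zero_mul]))
    have lhs : G.conv m (G.conv (G.conv m' (chi R V)) m) δ
        = m δ * (G.conv (G.conv m' (chi R V)) m) (G.src δ) :=
      G.conv_diag_right m _ hfV.2 δ
    have rhs : G.conv (G.conv (G.conv m m') (chi R V)) m δ
        = G.conv (G.conv m m') (chi R V) (G.rng δ) * m δ :=
      G.conv_diag_left _ m hsupp δ
    have hval : G.conv (G.conv m m') (chi R V) (G.rng δ)
        = G.conv m m' (G.rng δ) * chi R V (G.rng δ) := by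
      rw [G.conv_diag_right _ _ hchiV, G.src_rng]
    have hkey : m δ * (G.conv (G.conv m' (chi R V)) m) (G.src δ)
        = G.conv m m' (G.rng δ) * chi R V (G.rng δ) * m δ := by
      rw [← lhs, congrFun hchain δ, rhs, hval]
    rw [hkey, mul_comm (G.conv m m' (G.rng δ)) (chi R V (G.rng δ)), mul_assoc, hem δ]
  -- forward value formula
  have fwdVal : ∀ V : Set A, V ⊆ G.units → ∀ u, G.src u = u →
      (G.conv (G.conv m' (chi R V)) m) u
        = ∑ a ∈ (hSFm u).toFinset, m' (G.inv a) * (chi R V (G.rng a) * m a) := by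
    intro V hVu u hu
    have hchiV : Function.support (chi R (A := A) V) ⊆ G.units :=
      fun a ha => hVu (chi_support ha)
    have hsum : (G.conv (G.conv m' (chi R V)) m) u
        = ∑ a ∈ (hSFm u).toFinset, G.conv m' (chi R V) (G.comp u (G.inv a)) * m a := by
      refine G.conv_eq_sum _ m u _ ?_ ?_
      · intro a hp hne
        simp only [Set.Finite.mem_toFinset, Set.mem_setOf_eq]
        exact ⟨fun hz => hne (by rw [hz, mul_zero]), by rw [hp]; exact hu⟩
      · intro a ha
        simp only [Set.Finite.mem_toFinset, Set.mem_setOf_eq] at ha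
        rw [ha.2]; exact hu.symm
    rw [hsum]
    refine Finset.sum_congr rfl (fun a ha => ?_)
    simp only [Set.Finite.mem_toFinset, Set.mem_setOf_eq] at ha
    have hcu : G.comp u (G.inv a) = G.inv a := by
      have h := G.id_comp (G.inv a)
      rwa [G.rng_inv, ha.2] at h
    rw [hcu, G.conv_diag_right m' _ hchiV, G.src_inv, mul_assoc]
  -- forward multiplication formula
  have fwdMul : ∀ V : Set A, V ⊆ G.units → ∀ u, G.src u = u →
      ∀ (q : R) (c : A → R), (∀ a, G.src a = u → m a * q = c a * m a) →
      (G.conv (G.conv m' (chi R V)) m) u * q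
        = ∑ a ∈ (hSFm u).toFinset,
            m' (G.inv a) * (chi R V (G.rng a) * c a * m a) := by
    intro V hVu u hu q c hcq
    rw [fwdVal V hVu u hu, Finset.sum_mul]
    refine Finset.sum_congr rfl (fun a ha => ?_)
    simp only [Set.Finite.mem_toFinset, Set.mem_setOf_eq] at ha
    calc m' (G.inv a) * (chi R V (G.rng a) * m a) * q
        = m' (G.inv a) * (chi R V (G.rng a) * (m a * q)) := by ring
      _ = m' (G.inv a) * (chi R V (G.rng a) * (c a * m a)) := by rw [hcq a ha.2]
      _ = m' (G.inv a) * (chi R V (G.rng a) * c a * m a) := by ring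
  -- backward crux
  have bwdCrux : ∀ U : Set A, IsCompact U → IsOpen U → U ⊆ G.units → ∀ δ,
      (G.conv (G.conv m (chi R U)) m') (G.rng δ) * m δ
        = chi R U (G.src δ) * m δ := by
    intro U hUc hUo hUu δ
    have hchiU : Function.support (chi R (A := A) U) ⊆ G.units :=
      fun a ha => hUu (chi_support ha)
    have heU : G.InDiag (G.conv (G.conv m (chi R U)) m') :=
      h3 _ (G.chi_inDiag hUc hUo hUu)
    have hA : G.conv (G.conv (G.conv m (chi R U)) m') m
        = G.conv (G.conv m (chi R U)) (G.conv m' m) :=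
      G.conv_assoc (G.conv m (chi R U)) m' m hSFm' hSFm
    have lhs : G.conv (G.conv (G.conv m (chi R U)) m') m δ
        = (G.conv (G.conv m (chi R U)) m') (G.rng δ) * m δ :=
      G.conv_diag_left _ m heU.2 δ
    have rhs : G.conv (G.conv m (chi R U)) (G.conv m' m) δ
        = G.conv m (chi R U) δ * G.conv m' m (G.src δ) :=
      G.conv_diag_right _ _ hf.2 δ
    have hval : G.conv m (chi R U) δ = m δ * chi R U (G.src δ) :=
      G.conv_diag_right m _ hchiU δ
    have hkey : (G.conv (G.conv m (chi R U)) m') (G.rng δ) * m δ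
        = m δ * chi R U (G.src δ) * G.conv m' m (G.src δ) := by
      rw [← lhs, congrFun hA δ, rhs, hval]
    calc (G.conv (G.conv m (chi R U)) m') (G.rng δ) * m δ
        = m δ * chi R U (G.src δ) * G.conv m' m (G.src δ) := hkey
      _ = chi R U (G.src δ) * (m δ * G.conv m' m (G.src δ)) := by ring
      _ = chi R U (G.src δ) * m δ := by rw [hmf δ]
  -- backward value formula
  have bwdVal : ∀ U : Set A, U ⊆ G.units → ∀ x, G.src x = x →
      (G.conv (G.conv m (chi R U)) m') x
        = ∑ a ∈ (hSFm' x).toFinset, m (G.inv a) * (chi R U (G.rng a) * m' a) := by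
    intro U hUu x hx
    have hchiU : Function.support (chi R (A := A) U) ⊆ G.units :=
      fun a ha => hUu (chi_support ha)
    have hsum : (G.conv (G.conv m (chi R U)) m') x
        = ∑ a ∈ (hSFm' x).toFinset, G.conv m (chi R U) (G.comp x (G.inv a)) * m' a := by
      refine G.conv_eq_sum _ m' x _ ?_ ?_
      · intro a hp hne
        simp only [Set.Finite.mem_toFinset, Set.mem_setOf_eq]
        exact ⟨fun hz => hne (by rw [hz, mul_zero]), by rw [hp]; exact hx⟩
      · intro a ha
        simp only [Set.Finite.mem_toFinset, Set.mem_setOf_eq] at ha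
        rw [ha.2]; exact hx.symm
    rw [hsum]
    refine Finset.sum_congr rfl (fun a ha => ?_)
    simp only [Set.Finite.mem_toFinset, Set.mem_setOf_eq] at ha
    have hcu : G.comp x (G.inv a) = G.inv a := by
      have h := G.id_comp (G.inv a)
      rwa [G.rng_inv, ha.2] at h
    rw [hcu, G.conv_diag_right m _ hchiU, G.src_inv, mul_assoc]
  -- backward multiplication formula
  have bwdMul : ∀ U : Set A, U ⊆ G.units → ∀ x, G.src x = x →
      ∀ (q : R) (c : A → R), (∀ a, G.src a = x → q * m (G.inv a) = c a * m (G.inv a)) →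
      (G.conv (G.conv m (chi R U)) m') x * q
        = ∑ a ∈ (hSFm' x).toFinset,
            m (G.inv a) * (chi R U (G.rng a) * c a * m' a) := by
    intro U hUu x hx q c hcq
    rw [bwdVal U hUu x hx, Finset.sum_mul]
    refine Finset.sum_congr rfl (fun a ha => ?_)
    simp only [Set.Finite.mem_toFinset, Set.mem_setOf_eq] at ha
    calc m (G.inv a) * (chi R U (G.rng a) * m' a) * q
        = chi R U (G.rng a) * (q * m (G.inv a) * m' a) := by ring
      _ = chi R U (G.rng a) * (c a * m (G.inv a) * m' a) := by rw [hcq a ha.2]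
      _ = m (G.inv a) * (chi R U (G.rng a) * c a * m' a) := by ring
  constructor
  · -- source equal → range equal
    intro hss
    by_contra hrr
    obtain ⟨V, V', hVc, hVo, hVu, hxV, hV'c, hV'o, hV'u, hyV', hdisj⟩ :=
      G.exists_disjoint_nbhds hG ⟨G.rng α, G.src_rng α⟩ ⟨G.rng β, G.src_rng β⟩ hrr
    have hu : G.src (G.src α) = G.src α := G.src_src α
    -- nonvanishing
    have hk1 : (G.conv (G.conv m' (chi R V)) m) (G.src α) * m α = m α := by
      have h := fwdCrux V hVc hVo hVu α
      rw [chi_of_mem hxV, one_mul] at h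
      rw [mul_comm]; exact h
    have hk1' : (G.conv (G.conv m' (chi R V')) m) (G.src α) * m β = m β := by
      have h := fwdCrux V' hV'c hV'o hV'u β
      rw [chi_of_mem hyV', one_mul, ← hss] at h
      rw [mul_comm]; exact h
    -- crux property at src α
    have hqV : ∀ a, G.src a = G.src α →
        m a * (G.conv (G.conv m' (chi R V)) m) (G.src α)
          = chi R V (G.rng a) * m a := by
      intro a hsa
      have h := fwdCrux V hVc hVo hVu a
      rwa [hsa] at h
    have hqV' : ∀ a, G.src a = G.src α →
        m a * (G.conv (G.conv m' (chi R V')) m) (G.src α)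
          = chi R V' (G.rng a) * m a := by
      intro a hsa
      have h := fwdCrux V' hV'c hV'o hV'u a
      rwa [hsa] at h
    -- idempotency
    have hk2 : (G.conv (G.conv m' (chi R V)) m) (G.src α)
        * (G.conv (G.conv m' (chi R V)) m) (G.src α)
        = (G.conv (G.conv m' (chi R V)) m) (G.src α) := by
      rw [fwdMul V hVu (G.src α) hu _ _ hqV, fwdVal V hVu (G.src α) hu]
      refine Finset.sum_congr rfl (fun a _ => ?_)
      by_cases hmem : G.rng a ∈ V
      · simp [chi_of_mem hmem]
      · simp [chi_of_not_mem hmem]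
    have hk2' : (G.conv (G.conv m' (chi R V')) m) (G.src α)
        * (G.conv (G.conv m' (chi R V')) m) (G.src α)
        = (G.conv (G.conv m' (chi R V')) m) (G.src α) := by
      rw [fwdMul V' hV'u (G.src α) hu _ _ hqV', fwdVal V' hV'u (G.src α) hu]
      refine Finset.sum_congr rfl (fun a _ => ?_)
      by_cases hmem : G.rng a ∈ V'
      · simp [chi_of_mem hmem]
      · simp [chi_of_not_mem hmem]
    -- orthogonality
    have hk4 : (G.conv (G.conv m' (chi R V)) m) (G.src α)
        * (G.conv (G.conv m' (chi R V')) m) (G.src α) = 0 := by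
      rw [fwdMul V hVu (G.src α) hu _ _ hqV']
      refine Finset.sum_eq_zero (fun a _ => ?_)
      by_cases hmem : G.rng a ∈ V
      · rw [chi_of_not_mem (Set.disjoint_left.1 hdisj hmem)]
        ring
      · rw [chi_of_not_mem hmem]
        ring
    rcases hR _ hk2 with h0 | h1v
    · exact hα (by rw [← hk1, h0, zero_mul])
    rcases hR _ hk2' with h0' | h1' 
    · exact hβ (by rw [← hk1', h0', zero_mul])
    rw [h1v, h1', one_mul] at hk4
    exact hα (by rw [← hk1, h1v, hk4, zero_mul])
  · -- range equal → source equal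
    intro hrr
    by_contra hss
    obtain ⟨U, U', hUc, hUo, hUu, huU, hU'c, hU'o, hU'u, hvU', hdisj⟩ :=
      G.exists_disjoint_nbhds hG ⟨α, rfl⟩ ⟨β, rfl⟩ hss
    have hx : G.src (G.rng α) = G.rng α := G.src_rng α
    have hk1 : (G.conv (G.conv m (chi R U)) m') (G.rng α) * m α = m α := by
      have h := bwdCrux U hUc hUo hUu α
      rwa [chi_of_mem huU, one_mul] at h
    have hk1' : (G.conv (G.conv m (chi R U')) m') (G.rng α) * m β = m β := by
      have h := bwdCrux U' hU'c hU'o hU'u β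
      rwa [chi_of_mem hvU', one_mul, ← hrr] at h
    have hqU : ∀ a, G.src a = G.rng α →
        (G.conv (G.conv m (chi R U)) m') (G.rng α) * m (G.inv a)
          = chi R U (G.rng a) * m (G.inv a) := by
      intro a hsa
      have h := bwdCrux U hUc hUo hUu (G.inv a)
      rwa [G.rng_inv, hsa, G.src_inv] at h
    have hqU' : ∀ a, G.src a = G.rng α →
        (G.conv (G.conv m (chi R U')) m') (G.rng α) * m (G.inv a)
          = chi R U' (G.rng a) * m (G.inv a) := by
      intro a hsa
      have h := bwdCrux U' hU'c hU'o hU'u (G.inv a)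
      rwa [G.rng_inv, hsa, G.src_inv] at h
    have hk2 : (G.conv (G.conv m (chi R U)) m') (G.rng α)
        * (G.conv (G.conv m (chi R U)) m') (G.rng α)
        = (G.conv (G.conv m (chi R U)) m') (G.rng α) := by
      rw [bwdMul U hUu (G.rng α) hx _ _ hqU, bwdVal U hUu (G.rng α) hx]
      refine Finset.sum_congr rfl (fun a _ => ?_)
      by_cases hmem : G.rng a ∈ U
      · simp [chi_of_mem hmem]
      · simp [chi_of_not_mem hmem]
    have hk2' : (G.conv (G.conv m (chi R U')) m') (G.rng α)
        * (G.conv (G.conv m (chi R U')) m') (G.rng α)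
        = (G.conv (G.conv m (chi R U')) m') (G.rng α) := by
      rw [bwdMul U' hU'u (G.rng α) hx _ _ hqU', bwdVal U' hU'u (G.rng α) hx]
      refine Finset.sum_congr rfl (fun a _ => ?_)
      by_cases hmem : G.rng a ∈ U'
      · simp [chi_of_mem hmem]
      · simp [chi_of_not_mem hmem]
    have hk4 : (G.conv (G.conv m (chi R U)) m') (G.rng α)
        * (G.conv (G.conv m (chi R U')) m') (G.rng α) = 0 := by
      rw [bwdMul U hUu (G.rng α) hx _ _ hqU']
      refine Finset.sum_eq_zero (fun a _ => ?_)
      by_cases hmem : G.rng a ∈ U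
      · rw [chi_of_not_mem (Set.disjoint_left.1 hdisj hmem)]
        ring
      · rw [chi_of_not_mem hmem]
        ring
    rcases hR _ hk2 with h0 | h1v
    · exact hα (by rw [← hk1, h0, zero_mul])
    rcases hR _ hk2' with h0' | h1'
    · exact hβ (by rw [← hk1', h0', zero_mul])
    rw [h1v, h1', one_mul] at hk4
    exact hα (by rw [← hk1, h1v, hk4, zero_mul])
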